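/- Let Ω ⊂ ℝⁿ be a compact polytope, 𝒯 = {τ₁,...,τ_N} a partition of Ω into compact convex polytopes with pairwise disjoint interiors, and v a function on Ω that is affine on the interior of each τᵢ with ‖v‖_{L^∞(Ω)} = R. Then for every ε > 0 there exists a two-hidden-layer ReLU network f with second hidden layer of N+1 neurons such that f = v on Ω_𝒯^ε := ⋃ᵢ {x ∈ τᵢ : dist(x, ∂τᵢ) ≥ ε} and ‖f‖_{L^∞(Ω)} ≤ R. -/

import Mathlib

/-!
Normalise each cell to τᵢ = {x | ∀ j, ⟪uⱼ, x⟫ + βⱼ ≥ 0} with unit normals uⱼ, so that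
⟪uⱼ, x⟫ + βⱼ is the signed distance to the j-th facet hyperplane, and give τᵢ the second-layer
neuron relu(vᵢ(x) + R - Mᵢ qᵢ(x)), where vᵢ is the affine piece of v and
qᵢ(x) = ∑ⱼ relu(ε - ⟪uⱼ, x⟫ - βⱼ). A point at distance ≥ ε from ∂τᵢ is at distance ≥ ε from
every facet hyperplane, so qᵢ vanishes and the neuron outputs v + R ≥ 0; a point outside the
interior of τᵢ has some ⟪uⱼ, x⟫ + βⱼ ≤ 0, so qᵢ ≥ ε, and Mᵢ large (Ω is compact) kills the
neuron. As the interiors are disjoint, at most one neuron fires, always with output in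
[0, 2R], and a last neuron subtracts the constant R. Both vᵢ and qᵢ are linear combinations of
first-layer ReLU units, so all neurons can share one first layer.
-/

open scoped RealInnerProductSpace

open Metric

section Geometry

variable {E : Type*} [NormedAddCommGroup E] [InnerProductSpace ℝ E]

lemma ball_infDist_frontier_subset_interior {s : Set E} {x : E} (hx : x ∈ s) :
    ball x (infDist x (frontier s)) ⊆ interior s := by
  have hint : ∀ y ∈ ball x (infDist x (frontier s)), y ∈ closure s → y ∈ interior s :=
    fun y hy hys => by_contra fun h => ball_infDist_subset_compl hy ⟨hys, h⟩
  rintro y hy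
  refine (convex_ball x _).isPreconnected.subset_of_closure_inter_subset isOpen_interior
    ⟨x, mem_ball_self (pos_of_mem_ball hy), hint x (mem_ball_self (pos_of_mem_ball hy))
      (subset_closure hx)⟩ ?_ hy
  rintro z ⟨hzc, hz⟩
  exact hint z hz (closure_mono interior_subset hzc)

lemma le_inner_add_of_ball_subset {u x : E} {β ε : ℝ} (hu : ‖u‖ = 1) (hε : 0 < ε)
    (h : ball x ε ⊆ {y | 0 ≤ ⟪u, y⟫ + β}) : ε ≤ ⟪u, x⟫ + β := by
  have hmem : x - ε • u ∈ closure (ball x ε) := by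
    rw [closure_ball x hε.ne', mem_closedBall, dist_eq_norm, sub_sub_cancel_left, norm_neg,
      norm_smul, hu, mul_one, Real.norm_of_nonneg hε.le]
  have := closure_minimal h (isClosed_le continuous_const (by fun_prop)) hmem
  simp only [Set.mem_ofPred_eq, inner_sub_right, real_inner_smul_right,
    real_inner_self_eq_norm_sq, hu] at this
  linarith

end Geometry

section Polyhedron

variable {E ι : Type*} [NormedAddCommGroup E] [InnerProductSpace ℝ E]

def polyhedron (w : ι → E) (b : ι → ℝ) : Set E := {x | ∀ j, ⟪w j, x⟫ + b j ≥ 0}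

lemma exists_unit_normals {w : ι → E} (b : ι → ℝ) (hw : ∀ j, w j ≠ 0) :
    ∃ (u : ι → E) (β : ι → ℝ), (∀ j, ‖u j‖ = 1) ∧ polyhedron w b = polyhedron u β := by
  refine ⟨fun j => ‖w j‖⁻¹ • w j, fun j => ‖w j‖⁻¹ * b j, fun j => norm_smul_inv_norm (hw j), ?_⟩
  ext x
  simp only [polyhedron, Set.mem_ofPred_eq, real_inner_smul_left, ← mul_add, ge_iff_le]
  exact forall_congr' fun j =>
    (mul_nonneg_iff_of_pos_left (inv_pos.2 (norm_pos_iff.2 (hw j)))).symm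

lemma exists_nonpos_of_notMem_interior_polyhedron [Finite ι] {u : ι → E} {β : ι → ℝ} {x : E}
    (hx : x ∉ interior (polyhedron u β)) : ∃ j, ⟪u j, x⟫ + β j ≤ 0 := by
  by_contra! h
  refine hx (interior_maximal (t := {y | ∀ j, 0 < ⟪u j, y⟫ + β j}) (fun y hy j => (hy j).le) ?_ h)
  simp only [Set.ofPred_forall]
  exact isOpen_iInter_of_finite fun j => isOpen_lt continuous_const (by fun_prop)

lemma le_inner_add_of_le_infDist_frontier {u : ι → E} {β : ι → ℝ} (hu : ∀ j, ‖u j‖ = 1)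
    {x : E} (hx : x ∈ polyhedron u β) {ε : ℝ} (hε : 0 < ε)
    (hd : ε ≤ infDist x (frontier (polyhedron u β))) (j : ι) : ε ≤ ⟪u j, x⟫ + β j :=
  le_inner_add_of_ball_subset (hu j) hε fun _ hy =>
    interior_subset (ball_infDist_frontier_subset_interior hx (ball_subset_ball hd hy)) j

end Polyhedron

section ReLU

variable (E : Type*) [NormedAddCommGroup E] [InnerProductSpace ℝ E]

def reluSpan : Submodule ℝ (E → ℝ) :=
  Submodule.span ℝ (Set.range fun p : E × ℝ => fun x => max (⟪p.1, x⟫ + p.2) 0)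

variable {E}

lemma relu_mem_reluSpan (w : E) (β : ℝ) : (fun x => max (⟪w, x⟫ + β) 0) ∈ reluSpan E :=
  Submodule.subset_span ⟨(w, β), rfl⟩

lemma one_mem_reluSpan : (1 : E → ℝ) ∈ reluSpan E := by
  convert relu_mem_reluSpan (0 : E) 1
  simp

lemma affine_mem_reluSpan (a : E) (c : ℝ) : (fun x => ⟪a, x⟫ + c) ∈ reluSpan E := by
  have h : (fun x => ⟪a, x⟫ + c) =
      (fun x => max (⟪a, x⟫ + 0) 0) - (fun x => max (⟪-a, x⟫ + 0) 0) + c • (1 : E → ℝ) := by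
    ext x
    simp [inner_neg_left]
  rw [h]
  exact add_mem (sub_mem (relu_mem_reluSpan _ _) (relu_mem_reluSpan _ _))
    (Submodule.smul_mem _ _ one_mem_reluSpan)

lemma exists_shared_firstLayer {κ : Type*} [Fintype κ] (φ : κ → E → ℝ)
    (hφ : ∀ k, φ k ∈ reluSpan E) :
    ∃ (h₁ : ℕ) (W₁ : Fin h₁ → E) (b₁ : Fin h₁ → ℝ) (W₂ : κ → Fin h₁ → ℝ),
      ∀ k x, φ k x = ∑ j, W₂ k j * max (⟪W₁ j, x⟫ + b₁ j) 0 := by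
  classical
  choose c hc using fun k => Finsupp.mem_span_range_iff_exists_finsupp.1 (hφ k)
  let U := Finset.univ.biUnion fun k => (c k).support
  let e := Fintype.equivFin U
  refine ⟨Fintype.card U, fun j => (e.symm j).1.1, fun j => (e.symm j).1.2,
    fun k j => c k (e.symm j), fun k x => ?_⟩
  rw [e.symm.sum_comp (fun p : U => c k p * max (⟪p.1.1, x⟫ + p.1.2) 0),
    Finset.sum_coe_sort U (fun p => c k p * max (⟪p.1, x⟫ + p.2) 0), ← hc k,
    Finsupp.sum_of_support_subset _
      (Finset.subset_biUnion_of_mem (fun k => (c k).support) (Finset.mem_univ k))]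
  · simp [Finset.sum_apply, U]
  · simp

lemma exists_twoLayer_eq_sum_max_add {N : ℕ} (ψ : Fin N → E → ℝ) (hψ : ∀ i, ψ i ∈ reluSpan E)
    (c : ℝ) :
    ∃ (h₁ : ℕ) (W₁ : Fin h₁ → E) (b₁ : Fin h₁ → ℝ) (W₂ : Fin (N + 1) → Fin h₁ → ℝ)
      (b₂ w₃ : Fin (N + 1) → ℝ), ∀ x,
        ∑ k, w₃ k * max (∑ j, W₂ k j * max (⟪W₁ j, x⟫ + b₁ j) 0 + b₂ k) 0 =
          ∑ i, max (ψ i x) 0 + c := by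
  obtain ⟨h₁, W₁, b₁, W₂, hW⟩ := exists_shared_firstLayer
    (Fin.snoc (α := fun _ => E → ℝ) ψ 1)
    (Fin.lastCases (by simpa using one_mem_reluSpan) fun i => by simpa using hψ i)
  refine ⟨h₁, W₁, b₁, W₂, 0, Fin.snoc (fun _ => 1) c, fun x => ?_⟩
  simp [Fin.sum_univ_castSucc, ← hW]

end ReLU

section CellNeuron

variable {E ι : Type*} [NormedAddCommGroup E] [InnerProductSpace ℝ E] [Fintype ι]
  {u : ι → E} {β : ι → ℝ} {ε : ℝ} {x : E}

def facetPenalty (u : ι → E) (β : ι → ℝ) (ε : ℝ) (x : E) : ℝ :=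
  ∑ j, max (ε - (⟪u j, x⟫ + β j)) 0

lemma facetPenalty_mem_reluSpan : facetPenalty u β ε ∈ reluSpan E := by
  have h : facetPenalty u β ε = ∑ j, fun x => max (⟪-u j, x⟫ + (ε - β j)) 0 := by
    ext x
    simp only [facetPenalty, Finset.sum_apply, inner_neg_left]
    ring_nf
  rw [h]
  exact Submodule.sum_mem _ fun j _ => relu_mem_reluSpan _ _

lemma facetPenalty_nonneg : 0 ≤ facetPenalty u β ε x :=
  Finset.sum_nonneg fun _ _ => le_max_right _ _

lemma facetPenalty_eq_zero (h : ∀ j, ε ≤ ⟪u j, x⟫ + β j) : facetPenalty u β ε x = 0 :=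
  Finset.sum_eq_zero fun j _ => max_eq_right (by linarith [h j])

lemma le_facetPenalty {j : ι} (hj : ⟪u j, x⟫ + β j ≤ 0) : ε ≤ facetPenalty u β ε x :=
  (le_max_of_le_left (by linarith)).trans
    (Finset.single_le_sum (f := fun j => max (ε - (⟪u j, x⟫ + β j)) 0)
      (fun _ _ => le_max_right _ _) (Finset.mem_univ j))

lemma exists_cell_neuron {w : ι → E} {b : ι → ℝ} (hw : ∀ j, w j ≠ 0) {τ : Set E}
    (hτ : τ = polyhedron w b) (hε : 0 < ε) {Ω : Set E} {A : E → ℝ}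
    (hA : A ∈ reluSpan E) (hAΩ : BddAbove (A '' Ω)) :
    ∃ ψ ∈ reluSpan E, (∀ x, ψ x ≤ A x) ∧ (∀ x ∈ Ω, x ∉ interior τ → ψ x ≤ 0) ∧
      (∀ x ∈ τ, ε ≤ infDist x (frontier τ) → ψ x = A x) := by
  obtain ⟨u, β, hu, hwu⟩ := exists_unit_normals b hw
  rw [hwu] at hτ
  subst hτ
  obtain ⟨K, hK⟩ := hAΩ
  set M := max K 0 / ε
  have hM : 0 ≤ M := by positivity
  refine ⟨A - M • facetPenalty u β ε,
    sub_mem hA (Submodule.smul_mem _ _ facetPenalty_mem_reluSpan), fun x => ?_,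
    fun x hxΩ hx => ?_, fun x hx hd => ?_⟩
  · simpa using mul_nonneg hM facetPenalty_nonneg
  · obtain ⟨j, hj⟩ := exists_nonpos_of_notMem_interior_polyhedron hx
    have hpen : max K 0 ≤ M * facetPenalty u β ε x :=
      calc max K 0 = M * ε := (div_mul_cancel₀ _ hε.ne').symm
        _ ≤ M * facetPenalty u β ε x := mul_le_mul_of_nonneg_left (le_facetPenalty hj) hM
    simp only [Pi.sub_apply, Pi.smul_apply, smul_eq_mul]
    linarith [hK (Set.mem_image_of_mem A hxΩ), le_max_left K 0]
  · simp [facetPenalty_eq_zero (le_inner_add_of_le_infDist_frontier hu hx hε hd)]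

end CellNeuron

section Cells

variable {α ι : Type*} [TopologicalSpace α] [Fintype ι] {Ω : Set α} {τ : ι → Set α}
  {ψ : ι → α → ℝ} {x : α}

lemma sum_max_zero_eq_of_mem_interior
    (hdisj : ∀ i j, i ≠ j → interior (τ i) ∩ interior (τ j) = ∅)
    (hout : ∀ i, ∀ x ∈ Ω, x ∉ interior (τ i) → ψ i x ≤ 0) (hx : x ∈ Ω) {i : ι}
    (hi : x ∈ interior (τ i)) : ∑ i', max (ψ i' x) 0 = max (ψ i x) 0 :=
  Finset.sum_eq_single i
    (fun i' _ hi' => max_eq_right (hout i' x hx fun h' => (hdisj i' i hi').subset ⟨h', hi⟩))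
    (by simp)

lemma sum_max_zero_le_of_forall_interior
    (hdisj : ∀ i j, i ≠ j → interior (τ i) ∩ interior (τ j) = ∅)
    (hout : ∀ i, ∀ x ∈ Ω, x ∉ interior (τ i) → ψ i x ≤ 0) {g : α → ℝ}
    (hle : ∀ i, ∀ x ∈ interior (τ i), ψ i x ≤ g x) (hx : x ∈ Ω) :
    ∑ i, max (ψ i x) 0 ≤ max (g x) 0 := by
  by_cases h : ∃ i, x ∈ interior (τ i)
  · obtain ⟨i, hi⟩ := h
    rw [sum_max_zero_eq_of_mem_interior hdisj hout hx hi]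
    exact max_le_max_right 0 (hle i x hi)
  · push Not at h
    rw [Finset.sum_eq_zero fun i _ => max_eq_right (hout i x hx (h i))]
    exact le_max_right _ _

end Cells

theorem weak_representation_general
    (n N : ℕ)
    (Ω : Set (EuclideanSpace ℝ (Fin n))) (hΩc : IsCompact Ω)
    (τ : Fin N → Set (EuclideanSpace ℝ (Fin n)))
    (hτpoly : ∀ i, ∃ (m : ℕ) (w : Fin m → EuclideanSpace ℝ (Fin n)) (b : Fin m → ℝ),
      (∀ j, w j ≠ 0) ∧ τ i = {x | ∀ j, ⟪w j, x⟫ + b j ≥ 0})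
    (hcover : Ω = ⋃ i, τ i)
    (hdisj : ∀ i j, i ≠ j → interior (τ i) ∩ interior (τ j) = ∅)
    (v : EuclideanSpace ℝ (Fin n) → ℝ)
    (haff : ∀ i, ∃ (a : EuclideanSpace ℝ (Fin n)) (c : ℝ),
      ∀ x ∈ interior (τ i), v x = ⟪a, x⟫ + c)
    (R : ℝ) (hR : ∀ x ∈ Ω, |v x| ≤ R)
    (ε : ℝ) (hε : 0 < ε) :
    ∃ (h₁ : ℕ) (W₁ : Fin h₁ → EuclideanSpace ℝ (Fin n)) (b₁ : Fin h₁ → ℝ)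
      (W₂ : Fin (N + 1) → Fin h₁ → ℝ) (b₂ : Fin (N + 1) → ℝ) (w₃ : Fin (N + 1) → ℝ)
      (f : EuclideanSpace ℝ (Fin n) → ℝ),
      f = (fun x => ∑ k, w₃ k *
            max (∑ j, W₂ k j * max (⟪W₁ j, x⟫ + b₁ j) 0 + b₂ k) 0) ∧
      (∀ x ∈ ⋃ i, {x ∈ τ i | ε ≤ Metric.infDist x (frontier (τ i))}, f x = v x) ∧
      (∀ x ∈ Ω, |f x| ≤ R) := by
  have hτΩ : ∀ i, τ i ⊆ Ω := fun i => hcover ▸ Set.subset_iUnion τ i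
  have hdeep : ∀ i, ∀ x ∈ τ i, ε ≤ infDist x (frontier (τ i)) → x ∈ interior (τ i) :=
    fun i x hx hd => ball_infDist_frontier_subset_interior hx (mem_ball_self (hε.trans_le hd))
  have hcell : ∀ i, ∃ ψ ∈ reluSpan (EuclideanSpace ℝ (Fin n)),
      (∀ x ∈ interior (τ i), ψ x ≤ v x + R) ∧ (∀ x ∈ Ω, x ∉ interior (τ i) → ψ x ≤ 0) ∧
      (∀ x ∈ τ i, ε ≤ infDist x (frontier (τ i)) → ψ x = v x + R) := by
    intro i
    obtain ⟨m, w, b, hw, hτ⟩ := hτpoly i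
    obtain ⟨a, c, hv⟩ := haff i
    obtain ⟨ψ, hψ, hle, hout, hψdeep⟩ := exists_cell_neuron hw hτ hε
      (affine_mem_reluSpan a (c + R)) (hΩc.bddAbove_image (by fun_prop))
    refine ⟨ψ, hψ, fun x hx => (hle x).trans_eq ?_, hout, fun x hx hd => (hψdeep x hx hd).trans ?_⟩
    · rw [hv x hx, add_assoc]
    · rw [hv x (hdeep i x hx hd), add_assoc]
  choose ψ hψspan hψle hψout hψdeep using hcell
  obtain ⟨h₁, W₁, b₁, W₂, b₂, w₃, hf⟩ := exists_twoLayer_eq_sum_max_add ψ hψspan (-R)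
  refine ⟨h₁, W₁, b₁, W₂, b₂, w₃, _, rfl, ?_, fun x hx => ?_⟩
  · simp only [Set.mem_iUnion, Set.mem_ofPred_eq]
    rintro x ⟨i, hx, hd⟩
    have hxΩ := hτΩ i hx
    rw [hf, sum_max_zero_eq_of_mem_interior hdisj hψout hxΩ (hdeep i x hx hd),
      hψdeep i x hx hd, max_eq_left (by linarith [(abs_le.1 (hR x hxΩ)).1])]
    ring
  · have hvR := abs_le.1 (hR x hx)
    have hsum := sum_max_zero_le_of_forall_interior hdisj hψout hψle hx
    rw [max_eq_left (by linarith)] at hsum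
    have hnonneg : 0 ≤ ∑ i, max (ψ i x) 0 := Finset.sum_nonneg fun _ _ => le_max_right _ _
    rw [hf, abs_le]
    constructor <;> linarith

/-- Weak representation theorem.  Let Ω be a compact polytopal domain partitioned
into compact convex polytopes τ₁,...,τ_N with pairwise disjoint interiors, and let v be affine
on the interior of each cell with ‖v‖_{L^∞(Ω)} ≤ R (R attained as a sup bound).  Then for every
ε > 0 there is a two-hidden-layer ReLU network f, whose second hidden layer has N+1 neurons,
with f = v on Ω_𝒯^ε = ⋃ᵢ {x ∈ τᵢ : dist(x, ∂τᵢ) ≥ ε} and |f| ≤ R on Ω. -/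
theorem weak_representation
    (n N : ℕ)
    (Ω : Set (EuclideanSpace ℝ (Fin n))) (hΩc : IsCompact Ω)
    (τ : Fin N → Set (EuclideanSpace ℝ (Fin n)))
    (hτc : ∀ i, IsCompact (τ i))
    (hτpoly : ∀ i, ∃ (m : ℕ) (w : Fin m → EuclideanSpace ℝ (Fin n)) (b : Fin m → ℝ),
      (∀ j, w j ≠ 0) ∧ τ i = {x | ∀ j, ⟪w j, x⟫ + b j ≥ 0})
    (hτint : ∀ i, (interior (τ i)).Nonempty)
    (hcover : Ω = ⋃ i, τ i)
    (hdisj : ∀ i j, i ≠ j → interior (τ i) ∩ interior (τ j) = ∅)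
    (v : EuclideanSpace ℝ (Fin n) → ℝ)
    (haff : ∀ i, ∃ (a : EuclideanSpace ℝ (Fin n)) (c : ℝ),
      ∀ x ∈ interior (τ i), v x = ⟪a, x⟫ + c)
    (R : ℝ) (hR : ∀ x ∈ Ω, |v x| ≤ R)
    (ε : ℝ) (hε : 0 < ε) :
    ∃ (h₁ : ℕ) (W₁ : Fin h₁ → EuclideanSpace ℝ (Fin n)) (b₁ : Fin h₁ → ℝ)
      (W₂ : Fin (N + 1) → Fin h₁ → ℝ) (b₂ : Fin (N + 1) → ℝ) (w₃ : Fin (N + 1) → ℝ)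
      (f : EuclideanSpace ℝ (Fin n) → ℝ),
      f = (fun x => ∑ k, w₃ k *
            max (∑ j, W₂ k j * max (⟪W₁ j, x⟫ + b₁ j) 0 + b₂ k) 0) ∧
      (∀ x ∈ ⋃ i, {x ∈ τ i | ε ≤ Metric.infDist x (frontier (τ i))}, f x = v x) ∧
      (∀ x ∈ Ω, |f x| ≤ R) :=
  weak_representation_general n N Ω hΩc τ hτpoly hcover hdisj v haff R hR ε hε
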